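/- arXiv:0902.1623 — 5 statements merged into one kernel-verified Lean document; each statement's English description precedes it below -/
import Mathlib

section
/- Let n ≥ 3 be an integer, let H = (n-1)/n and let d ∈ ℝ. Then M_{H,d}(t) := sinh^{n-1}(t) − nH·I_{n-1}(t) − d tends to +∞ as t → ∞. -/
open Filter Topology

/-- `Ifun m t = ∫₀ᵗ sinh^m(r) dr`. -/
noncomputable def Ifun (m : ℕ) (t : ℝ) : ℝ := ∫ r in (0:ℝ)..t, Real.sinh r ^ m

/-- `Mfun n H d t = sinh^{n-1}(t) − nH·I_{n-1}(t) − d`. -/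
noncomputable def Mfun (n : ℕ) (H d t : ℝ) : ℝ :=
  Real.sinh t ^ (n - 1) - n * H * Ifun (n - 1) t - d

/-- `Pfun n H d t = sinh^{n-1}(t) + nH·I_{n-1}(t) + d`. -/
noncomputable def Pfun (n : ℕ) (H d t : ℝ) : ℝ :=
  Real.sinh t ^ (n - 1) + n * H * Ifun (n - 1) t + d

/-- `Qfun n H d t = (nH·I_{n-1}(t) + d)/√(M·P)`. -/
noncomputable def Qfun (n : ℕ) (H d t : ℝ) : ℝ :=
  (n * H * Ifun (n - 1) t + d) / Real.sqrt (Mfun n H d t * Pfun n H d t)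

/-! For `H = (n-1)/n` we have `nH = n - 1`, so `M_{H,d} + d = sinh^{n-1} - (n-1) I_{n-1}` has
derivative `(n-1) sinh^{n-2} (cosh - sinh) = (n-1) sinh^{n-2}(t) e^{-t}`. For `n ≥ 3` this
derivative is bounded below by a positive constant once `t ≥ 1`, so `M_{H,d}` grows at least
linearly. -/

open Real

lemma hasDerivAt_Ifun (m : ℕ) (t : ℝ) : HasDerivAt (Ifun m) (sinh t ^ m) t :=
  ((continuous_sinh.pow m).integral_hasStrictDerivAt 0 t).hasDerivAt

lemma sinh_pow_sub_mul_Ifun (k : ℕ) (t : ℝ) :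
    sinh t ^ (k + 1) - (k + 1) * Ifun (k + 1) t =
      (k + 1) * ∫ r in (0 : ℝ)..t, sinh r ^ k * exp (-r) := by
  have hderiv (r : ℝ) : HasDerivAt (fun s => sinh s ^ (k + 1) - (k + 1) * Ifun (k + 1) s)
      ((k + 1) * (sinh r ^ k * exp (-r))) r := by
    refine (((hasDerivAt_sinh r).pow (k + 1)).sub
      ((hasDerivAt_Ifun (k + 1) r).const_mul _)).congr_deriv ?_
    rw [← cosh_sub_sinh]
    push_cast
    ring
  rw [← intervalIntegral.integral_const_mul,
    intervalIntegral.integral_eq_sub_of_hasDerivAt (fun r _ => hderiv r)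
      (by apply Continuous.intervalIntegrable; fun_prop)]
  simp [Ifun]

lemma quarter_le_sinh_pow_mul_exp_neg (k : ℕ) {r : ℝ} (hr : 1 ≤ r) :
    1 / 4 ≤ sinh r ^ (k + 1) * exp (-r) := by
  have hsinh : 1 ≤ sinh r := hr.trans (self_le_sinh_iff.mpr (by linarith))
  have hexp : exp (-r) ≤ 1 / 2 := by
    rw [exp_neg, inv_le_comm₀ (exp_pos r) (by norm_num)]
    linarith [add_one_le_exp r]
  have hexp_mul : exp r * exp (-r) = 1 := by rw [← exp_add, add_neg_cancel, exp_zero]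
  have hsinh_exp : 1 / 4 ≤ sinh r * exp (-r) := by
    rw [sinh_eq]
    nlinarith [exp_pos (-r)]
  calc 1 / 4 ≤ sinh r * exp (-r) := hsinh_exp
    _ ≤ sinh r ^ k * (sinh r * exp (-r)) :=
        le_mul_of_one_le_left (by linarith) (one_le_pow₀ hsinh)
    _ = sinh r ^ (k + 1) * exp (-r) := by ring

lemma tendsto_intervalIntegral_atTop_of_le {f : ℝ → ℝ} {a c : ℝ} (hf : Continuous f)
    (hc : 0 < c) (hfc : ∀ r, a ≤ r → c ≤ f r) (b : ℝ) :
    Tendsto (fun t => ∫ r in b..t, f r) atTop atTop := by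
  have hlower : ∀ t, a ≤ t → (∫ r in b..a, f r) + c * (t - a) ≤ ∫ r in b..t, f r := by
    intro t ht
    rw [← intervalIntegral.integral_add_adjacent_intervals (hf.intervalIntegrable b a)
      (hf.intervalIntegrable a t)]
    gcongr
    simpa [mul_comm] using intervalIntegral.integral_mono_on ht
      (intervalIntegrable_const (μ := MeasureTheory.volume)) (hf.intervalIntegrable a t)
      fun r hr => hfc r hr.1
  refine tendsto_atTop_mono' atTop ((eventually_ge_atTop a).mono hlower) ?_
  exact tendsto_atTop_add_const_left _ _
    ((tendsto_atTop_add_const_right _ _ tendsto_id).const_mul_atTop hc)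

/-- For `n ≥ 3`, `H = (n-1)/n` and `d ∈ ℝ`, `M_{H,d}(t) → +∞` as `t → ∞`. -/
theorem stmt3 (n : ℕ) (hn : 3 ≤ n) (H d : ℝ) (hH : H = ((n : ℝ) - 1) / n) :
    Tendsto (Mfun n H d) atTop atTop := by
  obtain ⟨k, rfl⟩ : ∃ k, n = k + 3 := ⟨n - 3, by omega⟩
  have hnH : ((k + 3 : ℕ) : ℝ) * H = (k + 1 : ℕ) + 1 := by
    rw [hH]; push_cast; field_simp; ring
  have hM : Mfun (k + 3) H d = fun t => ((k + 1 : ℕ) + 1) *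
      (∫ r in (0 : ℝ)..t, sinh r ^ (k + 1) * exp (-r)) - d := by
    ext t
    rw [Mfun, hnH, show k + 3 - 1 = (k + 1) + 1 by omega, sinh_pow_sub_mul_Ifun]
  rw [hM]
  exact tendsto_atTop_add_const_right _ _
    ((tendsto_intervalIntegral_atTop_of_le (by fun_prop) (by norm_num)
      (fun r hr => quarter_le_sinh_pow_mul_exp_neg k hr) 0).const_mul_atTop (by positivity))
end

section
/- Let n ≥ 2 be an integer, let d > 0, and assume either (i) n ≥ 3 and 0 < H ≤ (n-1)/n, or (ii) n = 2 and 0 < H < 1/2, or (iii) n = 2, H = 1/2 and 0 < d < 1. Let a > 0 be the unique zero of M_{H,d}. Then for every ρ > a, the function Q_{H,d}(t) := (nH·I_{n-1}(t) + d)/√(M_{H,d}(t)·P_{H,d}(t)) is integrable on the interval (a, ρ) (the improper integral converges at a, where M_{H,d} has a simple zero). -/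
open Filter Topology

lemma Ifun_hasDerivAt (m : ℕ) (t : ℝ) :
    HasDerivAt (Ifun m) (Real.sinh t ^ m) t :=
  ((Real.continuous_sinh.pow m).integral_hasStrictDerivAt 0 t).hasDerivAt

lemma Ifun_nonneg (m : ℕ) {t : ℝ} (ht : 0 ≤ t) : 0 ≤ Ifun m t := by
  apply intervalIntegral.integral_nonneg ht
  intro r hr
  exact pow_nonneg (Real.sinh_nonneg_iff.2 hr.1) m

/-- Let `n ≥ 2`, `d > 0`, and assume (i) `n ≥ 3` and `0 < H ≤ (n-1)/n`, or (ii) `n = 2`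
and `0 < H < 1/2`, or (iii) `n = 2`, `H = 1/2` and `0 < d < 1`. Let `a > 0` be the (unique)
zero of `M_{H,d}`. Then for every `ρ > a`, `Q_{H,d}` is integrable on `(a, ρ)`. -/
theorem stmt7 (n : ℕ) (hn : 2 ≤ n) (H d : ℝ) (hd : 0 < d)
    (hcase : (3 ≤ n ∧ 0 < H ∧ H ≤ ((n : ℝ) - 1) / n) ∨
             (n = 2 ∧ 0 < H ∧ H < 1 / 2) ∨
             (n = 2 ∧ H = 1 / 2 ∧ 0 < d ∧ d < 1))
    (a : ℝ) (ha : 0 < a) (haz : Mfun n H d a = 0) :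
    ∀ ρ : ℝ, a < ρ → MeasureTheory.IntegrableOn (Qfun n H d) (Set.Ioo a ρ) := by
  intro ρ hρ
  have hn0 : (0:ℝ) < n := by positivity
  -- extract 0 < H and n*H ≤ n-1
  have hH : 0 < H := by
    rcases hcase with ⟨_, h, _⟩ | ⟨_, h, _⟩ | ⟨_, h, _⟩
    · exact h
    · exact h
    · rw [h]; norm_num
  have hnH : (n:ℝ) * H ≤ (n:ℝ) - 1 := by
    rcases hcase with ⟨_, _, h⟩ | ⟨hn2, _, h⟩ | ⟨hn2, h, _⟩
    · rw [div_eq_mul_inv] at h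
      calc (n:ℝ) * H ≤ (n:ℝ) * (((n:ℝ) - 1) * (n:ℝ)⁻¹) := by
            apply mul_le_mul_of_nonneg_left h (le_of_lt hn0)
        _ = (n:ℝ) - 1 := by field_simp
    · subst hn2; push_cast; linarith
    · subst hn2; rw [h]; norm_num
  have hcast : ((n - 1 : ℕ) : ℝ) = (n:ℝ) - 1 := by
    have : 1 ≤ n := by omega
    push_cast [Nat.cast_sub this]; ring
  -- derivative of M
  set M' : ℝ → ℝ := fun t =>
    ((n - 1 : ℕ) : ℝ) * Real.sinh t ^ (n - 1 - 1) * Real.cosh t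
      - (n:ℝ) * H * Real.sinh t ^ (n - 1) with hM'def
  have hSder : ∀ t : ℝ, HasDerivAt (fun s => Real.sinh s ^ (n - 1))
      (((n - 1 : ℕ) : ℝ) * Real.sinh t ^ (n - 1 - 1) * Real.cosh t) t := by
    intro t
    exact (Real.hasDerivAt_sinh t).pow (n - 1)
  have hM : ∀ t : ℝ, HasDerivAt (Mfun n H d) (M' t) t := by
    intro t
    have h1 : HasDerivAt (fun s => (n:ℝ) * H * Ifun (n - 1) s)
        ((n:ℝ) * H * Real.sinh t ^ (n - 1)) t :=
      (Ifun_hasDerivAt (n - 1) t).const_mul _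
    exact ((hSder t).sub h1).sub_const d
  -- positivity of M' on (0, ∞)
  have hM'pos : ∀ t : ℝ, 0 < t → 0 < M' t := by
    intro t ht
    have hs : 0 < Real.sinh t := Real.sinh_pos_iff.2 ht
    have hc : Real.sinh t < Real.cosh t := Real.sinh_lt_cosh t
    have hk : n - 1 - 1 + 1 = n - 1 := by omega
    have hpow : Real.sinh t ^ (n - 1) = Real.sinh t ^ (n - 1 - 1) * Real.sinh t := by
      rw [← pow_succ, hk]
    have hp1 : 0 < Real.sinh t ^ (n - 1 - 1) := pow_pos hs _
    have hp2 : 0 < Real.sinh t ^ (n - 1) := pow_pos hs _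
    have h1 : (n:ℝ) * H * Real.sinh t ^ (n - 1) ≤ ((n:ℝ) - 1) * Real.sinh t ^ (n - 1) :=
      mul_le_mul_of_nonneg_right hnH (le_of_lt hp2)
    have h2 : ((n:ℝ) - 1) * Real.sinh t ^ (n - 1)
        < ((n:ℝ) - 1) * (Real.sinh t ^ (n - 1 - 1) * Real.cosh t) := by
      rw [hpow]
      have hn1 : (0:ℝ) < (n:ℝ) - 1 := by
        have : (2:ℝ) ≤ n := by exact_mod_cast hn
        linarith
      apply mul_lt_mul_of_pos_left _ hn1
      calc Real.sinh t ^ (n - 1 - 1) * Real.sinh t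
          < Real.sinh t ^ (n - 1 - 1) * Real.cosh t := by
            exact mul_lt_mul_of_pos_left hc hp1
        _ = Real.sinh t ^ (n - 1 - 1) * Real.cosh t := rfl
    rw [hM'def]
    simp only [hcast]
    nlinarith [h1, h2]
  -- continuity of everything
  have hIc : Continuous (Ifun (n - 1)) :=
    continuous_iff_continuousAt.2 fun t => (Ifun_hasDerivAt (n - 1) t).continuousAt
  have hMc : Continuous (Mfun n H d) :=
    continuous_iff_continuousAt.2 fun t => (hM t).continuousAt
  have hPc : Continuous (Pfun n H d) := by
    unfold Pfun
    exact ((Real.continuous_sinh.pow _).add (continuous_const.mul hIc)).add continuous_const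
  have hM'c : Continuous M' := by
    rw [hM'def]
    exact ((continuous_const.mul (Real.continuous_sinh.pow _)).mul Real.continuous_cosh).sub
      (continuous_const.mul (Real.continuous_sinh.pow _))
  have hfc : Continuous (fun t => (n:ℝ) * H * Ifun (n - 1) t + d) :=
    (continuous_const.mul hIc).add continuous_const
  -- M strictly increasing on Ici a, hence positive on (a, ρ]
  have hmono : StrictMonoOn (Mfun n H d) (Set.Ici a) := by
    apply strictMonoOn_of_deriv_pos (convex_Ici a) hMc.continuousOn
    intro x hx
    rw [interior_Ici] at hx
    rw [(hM x).deriv]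
    exact hM'pos x (lt_trans ha hx)
  have hMpos : ∀ t ∈ Set.Ioo a ρ, 0 < Mfun n H d t := by
    intro t ht
    have := hmono (Set.self_mem_Ici) (Set.mem_Ici.2 (le_of_lt ht.1)) ht.1
    rwa [haz] at this
  -- P ≥ d and numerator ≥ d on [a, ρ]
  have hfpos : ∀ t ∈ Set.Icc a ρ, d ≤ (n:ℝ) * H * Ifun (n - 1) t + d := by
    intro t ht
    have h0t : (0:ℝ) ≤ t := le_trans (le_of_lt ha) ht.1
    have := mul_nonneg (mul_nonneg hn0.le hH.le) (Ifun_nonneg (n - 1) h0t)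
    linarith
  have hPpos : ∀ t ∈ Set.Icc a ρ, d ≤ Pfun n H d t := by
    intro t ht
    have h0t : (0:ℝ) ≤ t := le_trans (le_of_lt ha) ht.1
    have h1 := hfpos t ht
    have h2 : 0 ≤ Real.sinh t ^ (n - 1) := pow_nonneg (Real.sinh_nonneg_iff.2 h0t) _
    unfold Pfun; linarith
  -- min of M' and max of numerator on [a, ρ]
  obtain ⟨x0, hx0, hx0min⟩ := isCompact_Icc.exists_isMinOn (Set.nonempty_Icc.2 hρ.le)
    hM'c.continuousOn
  set c : ℝ := M' x0 with hc_def
  have hc : 0 < c := hM'pos x0 (lt_of_lt_of_le ha hx0.1)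
  obtain ⟨x1, hx1, hx1max⟩ := isCompact_Icc.exists_isMaxOn (Set.nonempty_Icc.2 hρ.le)
    hfc.continuousOn
  set Cf : ℝ := (n:ℝ) * H * Ifun (n - 1) x1 + d with hCf_def
  have hCf : 0 < Cf := lt_of_lt_of_le hd (hfpos x1 hx1)
  -- the dominating function: K * (√M)'
  set g' : ℝ → ℝ := fun t => M' t / (2 * Real.sqrt (Mfun n H d t)) with hg'def
  have hg'int : MeasureTheory.IntegrableOn g' (Set.Ioc a ρ) := by
    apply intervalIntegral.integrableOn_deriv_of_nonneg
      (g := fun t => Real.sqrt (Mfun n H d t))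
    · exact (Real.continuous_sqrt.comp hMc).continuousOn
    · intro x hx
      exact (hM x).sqrt (ne_of_gt (hMpos x hx))
    · intro x hx
      apply div_nonneg (le_of_lt (hM'pos x (lt_trans ha hx.1)))
      positivity
  set K : ℝ := 2 * Cf / (c * Real.sqrt d) with hKdef
  have hKint : MeasureTheory.IntegrableOn (fun t => K * g' t) (Set.Ioo a ρ) :=
    ((hg'int.mono_set Set.Ioo_subset_Ioc_self).const_mul K)
  -- Q is continuous on Ioo a ρ
  have hQmeas : MeasureTheory.AEStronglyMeasurable (Qfun n H d)
      (MeasureTheory.volume.restrict (Set.Ioo a ρ)) := by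
    apply ContinuousOn.aestronglyMeasurable _ measurableSet_Ioo
    apply ContinuousOn.div hfc.continuousOn
      (Real.continuous_sqrt.comp (hMc.mul hPc)).continuousOn
    intro t ht
    have hMt := hMpos t ht
    have hPt := lt_of_lt_of_le hd (hPpos t (Set.mem_Icc_of_Ioo ht))
    exact ne_of_gt (Real.sqrt_pos.2 (mul_pos hMt hPt))
  -- dominate
  apply MeasureTheory.Integrable.mono' hKint hQmeas
  rw [MeasureTheory.ae_restrict_iff' measurableSet_Ioo]
  apply Filter.Eventually.of_forall
  intro t ht
  have hMt : 0 < Mfun n H d t := hMpos t ht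
  have hPt : d ≤ Pfun n H d t := hPpos t (Set.mem_Icc_of_Ioo ht)
  have hft : d ≤ (n:ℝ) * H * Ifun (n - 1) t + d := hfpos t (Set.mem_Icc_of_Ioo ht)
  have hftCf : (n:ℝ) * H * Ifun (n - 1) t + d ≤ Cf := hx1max (Set.mem_Icc_of_Ioo ht)
  have hM't : c ≤ M' t := hx0min (Set.mem_Icc_of_Ioo ht)
  have hsM : 0 < Real.sqrt (Mfun n H d t) := Real.sqrt_pos.2 hMt
  have hsd : 0 < Real.sqrt d := Real.sqrt_pos.2 hd
  have hsP : Real.sqrt d ≤ Real.sqrt (Pfun n H d t) := Real.sqrt_le_sqrt hPt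
  have hQnn : 0 ≤ Qfun n H d t := by
    unfold Qfun
    apply div_nonneg (by linarith) (Real.sqrt_nonneg _)
  rw [Real.norm_of_nonneg hQnn]
  unfold Qfun
  rw [Real.sqrt_mul (le_of_lt hMt)]
  rw [hg'def, hKdef]
  have hsPpos : 0 < Real.sqrt (Pfun n H d t) := lt_of_lt_of_le hsd hsP
  rw [div_le_iff₀ (by positivity)]
  have key : (n:ℝ) * H * Ifun (n - 1) t + d ≤
      2 * Cf / (c * Real.sqrt d) * (M' t / (2 * Real.sqrt (Mfun n H d t)))
        * Real.sqrt (Mfun n H d t) * Real.sqrt d := by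
    have e1 : 2 * Cf / (c * Real.sqrt d) * (M' t / (2 * Real.sqrt (Mfun n H d t)))
        * Real.sqrt (Mfun n H d t) * Real.sqrt d = Cf * (M' t / c) := by
      field_simp
    rw [e1]
    have h1 : (1:ℝ) ≤ M' t / c := (one_le_div hc).2 hM't
    nlinarith [hCf]
  calc (n:ℝ) * H * Ifun (n - 1) t + d
      ≤ 2 * Cf / (c * Real.sqrt d) * (M' t / (2 * Real.sqrt (Mfun n H d t)))
        * Real.sqrt (Mfun n H d t) * Real.sqrt d := key
    _ ≤ 2 * Cf / (c * Real.sqrt d) * (M' t / (2 * Real.sqrt (Mfun n H d t)))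
        * (Real.sqrt (Mfun n H d t) * Real.sqrt (Pfun n H d t)) := by
        have hnn : 0 ≤ 2 * Cf / (c * Real.sqrt d)
            * (M' t / (2 * Real.sqrt (Mfun n H d t))) * Real.sqrt (Mfun n H d t) := by
          have : 0 ≤ M' t := le_trans hc.le hM't
          positivity
        calc 2 * Cf / (c * Real.sqrt d) * (M' t / (2 * Real.sqrt (Mfun n H d t)))
              * Real.sqrt (Mfun n H d t) * Real.sqrt d
            ≤ 2 * Cf / (c * Real.sqrt d) * (M' t / (2 * Real.sqrt (Mfun n H d t)))
              * Real.sqrt (Mfun n H d t) * Real.sqrt (Pfun n H d t) :=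
              mul_le_mul_of_nonneg_left hsP hnn
          _ = _ := by ring
end

section
/- Let n = 2, H = 1/2 and 0 ≤ d < 1. Choose ρ₀ > 0 such that M_{H,d} > 0 on [ρ₀, ∞), and define λ(ρ) := ∫_{ρ₀}^{ρ} Q_{H,d}(t) dt for ρ ≥ ρ₀. Then lim_{ρ→∞} e^{−ρ/2}·λ(ρ) = 1/√(1 − d). -/
open Filter Topology

/-! With `n = 2`, `H = 1/2` one has `I₁ = cosh - 1`, so for `c = 1 - d` and `x = e^{-t}`:
`M = c - x`, `P = e^t - c` and `Q(t) = e^{t/2} q(x)` with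
`q(x) = (1 - 2cx + x²) / (2√((c - x)(1 - cx)))`. The profile `q` is differentiable at `0` with
`q(0) = 1/(2√c)`, so `Q(t) - e^{t/2}/(2√c) = O(e^{-t/2})` is integrable on `[ρ₀, ∞)` and
`λ(ρ) = e^{ρ/2}/√c + O(1)`. -/

open Real Set Asymptotics

theorem tendsto_exp_neg_mul_mul_intervalIntegral_of_isBigO {f : ℝ → ℝ} {a b b' L : ℝ}
    (hb : 0 < b) (hb' : 0 < b') (hf : ContinuousOn f (Ici a))
    (ho : (fun t => f t - L * exp (b * t)) =O[atTop] fun t => exp (-b' * t)) :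
    Tendsto (fun ρ => exp (-b * ρ) * ∫ t in a..ρ, f t) atTop (𝓝 (L / b)) := by
  set g := fun t => f t - L * exp (b * t)
  have hg : MeasureTheory.IntegrableOn g (Ioi a) :=
    integrable_of_isBigO_exp_neg hb' (hf.sub (by fun_prop)) ho
  have hdecay : Tendsto (fun ρ => exp (-b * ρ)) atTop (𝓝 0) :=
    tendsto_exp_atBot.comp (tendsto_id.const_mul_atTop_of_neg (neg_neg_iff_pos.2 hb))
  have hlim : Tendsto (fun ρ => L / b - L * exp (b * a) / b * exp (-b * ρ)
      + exp (-b * ρ) * ∫ t in a..ρ, g t) atTop (𝓝 (L / b)) := by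
    simpa using (tendsto_const_nhds.sub (hdecay.const_mul (L * exp (b * a) / b))).add
      (hdecay.mul (MeasureTheory.intervalIntegral_tendsto_integral_Ioi a hg tendsto_id))
  refine hlim.congr' ?_
  filter_upwards [eventually_ge_atTop a] with ρ hρ
  have hfi : IntervalIntegrable f MeasureTheory.volume a ρ :=
    (hf.mono (by simpa [uIcc_of_le hρ] using Icc_subset_Ici_self)).intervalIntegrable
  have hexp : ∫ t in a..ρ, L * exp (b * t) = L * (exp (b * ρ) - exp (b * a)) / b := by
    rw [intervalIntegral.integral_const_mul, intervalIntegral.integral_comp_mul_left _ hb.ne',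
      integral_exp, smul_eq_mul]
    field_simp
  rw [intervalIntegral.integral_sub hfi
    ((by fun_prop : Continuous fun t => L * exp (b * t)).intervalIntegrable a ρ), hexp]
  have hcancel : exp (-b * ρ) * exp (b * ρ) = 1 := by rw [← exp_add]; simp
  linear_combination (-(L / b)) * hcancel

lemma Ifun_one (t : ℝ) : Ifun 1 t = cosh t - 1 := by
  rw [Ifun, ← cosh_zero]
  simp only [pow_one]
  exact intervalIntegral.integral_eq_sub_of_hasDerivAt (fun x _ => hasDerivAt_cosh x)
    (continuous_sinh.intervalIntegrable 0 t)

lemma Mfun_two_half (d t : ℝ) : Mfun 2 (1 / 2) d t = 1 - d - exp (-t) := by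
  simp only [Mfun, Ifun_one, Nat.add_one_sub_one, pow_one, sinh_eq, cosh_eq]
  ring

lemma Pfun_two_half (d t : ℝ) : Pfun 2 (1 / 2) d t = exp t - (1 - d) := by
  simp only [Pfun, Ifun_one, Nat.add_one_sub_one, pow_one, sinh_eq, cosh_eq]
  ring

noncomputable def qProfile (c x : ℝ) : ℝ :=
  (1 - 2 * c * x + x ^ 2) / (2 * √((c - x) * (1 - c * x)))

lemma qProfile_zero (c : ℝ) : qProfile c 0 = 1 / (2 * √c) := by
  simp [qProfile]

lemma differentiableAt_qProfile {c x : ℝ} (h : 0 < (c - x) * (1 - c * x)) :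
    DifferentiableAt ℝ (qProfile c) x := by
  unfold qProfile
  fun_prop (disch := positivity)

lemma Qfun_two_half (d t : ℝ) :
    Qfun 2 (1 / 2) d t = exp (t / 2) * qProfile (1 - d) (exp (-t)) := by
  set c := 1 - d
  set x := exp (-t)
  have hsq : exp t = exp (t / 2) ^ 2 := by rw [← exp_nat_mul]; ring_nf
  have hinv : exp t * x = 1 := by rw [← exp_add]; simp
  have hnum : (2 : ℕ) * (1 / 2 : ℝ) * Ifun (2 - 1) t + d
      = exp t * (1 - 2 * c * x + x ^ 2) / 2 := by
    simp only [Ifun_one, Nat.add_one_sub_one, cosh_eq, c, x]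
    linear_combination (c - x / 2) * hinv
  have hden : √(Mfun 2 (1 / 2) d t * Pfun 2 (1 / 2) d t)
      = exp (t / 2) * √((c - x) * (1 - c * x)) := by
    rw [Mfun_two_half, Pfun_two_half, ← sqrt_sq (exp_pos (t / 2)).le,
      ← sqrt_mul (by positivity), ← hsq]
    congr 1
    linear_combination (c - x) * c * hinv
  rw [Qfun, hnum, hden, qProfile, hsq]
  field_simp

theorem stmt9_general (d : ℝ) (hd0 : 0 ≤ d) (hd1 : d < 1)
    (ρ₀ : ℝ)
    (hM : ∀ t, ρ₀ ≤ t → 0 < Mfun 2 (1 / 2) d t) :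
    Tendsto (fun ρ : ℝ => Real.exp (-ρ / 2) * ∫ t in ρ₀..ρ, Qfun 2 (1 / 2) d t) atTop
      (𝓝 (1 / Real.sqrt (1 - d))) := by
  have hc : 0 < 1 - d := by linarith
  have hQ : Qfun 2 (1 / 2) d = fun t => exp (t / 2) * qProfile (1 - d) (exp (-t)) :=
    funext (Qfun_two_half d)
  have hcont : ContinuousOn (Qfun 2 (1 / 2) d) (Ici ρ₀) := by
    intro t ht
    have hx : exp (-t) < 1 - d := by linarith [Mfun_two_half d t ▸ hM t ht]
    have hcx : (1 - d) * exp (-t) < 1 := by nlinarith [exp_pos (-t)]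
    have hq := (differentiableAt_qProfile (mul_pos (sub_pos.2 hx) (sub_pos.2 hcx))).continuousAt
    rw [hQ]
    exact (ContinuousAt.mul (by fun_prop)
      (hq.comp (f := fun t => exp (-t)) (by fun_prop))).continuousWithinAt
  have ho : (fun t => Qfun 2 (1 / 2) d t - 1 / (2 * √(1 - d)) * exp (1 / 2 * t))
      =O[atTop] fun t => exp (-(1 / 2) * t) := by
    have hq := (differentiableAt_qProfile (c := 1 - d) (x := 0) (by simpa using hc)).isBigO_sub
    refine ((isBigO_refl (fun t => exp (t / 2)) atTop).mul
      (hq.comp_tendsto tendsto_exp_neg_atTop_nhds_zero)).congr (fun t => ?_) (fun t => ?_)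
    · simp only [Function.comp, hQ, qProfile_zero]; ring_nf
    · simp only [Function.comp, sub_zero]; rw [← exp_add]; ring_nf
  convert tendsto_exp_neg_mul_mul_intervalIntegral_of_isBigO (by norm_num) (by norm_num) hcont ho
    using 2 with ρ
  · ring_nf
  · field_simp

/-- Let `n = 2`, `H = 1/2` and `0 ≤ d < 1`. Let `ρ₀ > 0` be such that `M_{H,d} > 0` on
`[ρ₀, ∞)`, and set `λ(ρ) := ∫_{ρ₀}^{ρ} Q_{H,d}(t) dt`. Then
`lim_{ρ→∞} e^{−ρ/2}·λ(ρ) = 1/√(1 − d)`. -/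
theorem stmt9 (d : ℝ) (hd0 : 0 ≤ d) (hd1 : d < 1)
    (ρ₀ : ℝ) (hρ₀ : 0 < ρ₀)
    (hM : ∀ t, ρ₀ ≤ t → 0 < Mfun 2 (1 / 2) d t) :
    Tendsto (fun ρ : ℝ => Real.exp (-ρ / 2) * ∫ t in ρ₀..ρ, Qfun 2 (1 / 2) d t) atTop
      (𝓝 (1 / Real.sqrt (1 - d))) :=
  stmt9_general d hd0 hd1 ρ₀ hM
end

section
/- Let n = 3, H = 2/3 and d ∈ ℝ. Then M_{H,d}(t) > 0 and P_{H,d}(t) > 0 for all sufficiently large t, and lim_{t→∞} 2√2 · √t · e^{−t} · Q_{H,d}(t) = 1. -/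
open Filter Topology

/-!
For `n = 3` and `nH = 2` we have `2 I₂(t) = sinh t cosh t − t`, so everything is explicit:
`M = t − d − (1 − e^{−2t})/2`, `P = (e^{2t} − 1)/2 − t + d`, and the numerator of `Q` is
`(e^{2t} − e^{−2t})/4 − t + d`. Hence `M ~ t`, `P ~ e^{2t}/2`, the numerator is `~ e^{2t}/4`,
and `√t e^{−t} Q → (1/4)/√(1/2) = 1/(2√2)`.
-/

open Real

lemma Ifun_two (t : ℝ) : Ifun 2 t = (sinh t * cosh t - t) / 2 := by
  have hderiv : ∀ r ∈ Set.uIcc (0:ℝ) t,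
      HasDerivAt (fun r => (sinh r * cosh r - r) / 2) (sinh r ^ 2) r := by
    intro r _
    refine ((((hasDerivAt_sinh r).mul (hasDerivAt_cosh r)).sub
      (hasDerivAt_id' r)).div_const 2).congr_deriv ?_
    linear_combination (1 / 2) * cosh_sq r
  rw [Ifun, intervalIntegral.integral_eq_sub_of_hasDerivAt hderiv
    ((continuous_sinh.pow 2).intervalIntegrable 0 t)]
  simp

section ExplicitFormulas

variable (d t : ℝ)

lemma Mfun_three_eq : Mfun 3 (2 / 3) d t = t - d - (1 - exp (-t) ^ 2) / 2 := by
  rw [Mfun, Ifun_two, sinh_eq, cosh_eq, exp_neg]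
  push_cast
  field_simp
  ring

lemma Pfun_three_eq : Pfun 3 (2 / 3) d t = (exp t ^ 2 - 1) / 2 - t + d := by
  rw [Pfun, Ifun_two, sinh_eq, cosh_eq, exp_neg]
  push_cast
  field_simp
  ring

lemma Qfun_three_eq :
    Qfun 3 (2 / 3) d t = ((exp t ^ 2 - exp (-t) ^ 2) / 4 - t + d) /
      √(Mfun 3 (2 / 3) d t * Pfun 3 (2 / 3) d t) := by
  rw [Qfun, Ifun_two, sinh_eq, cosh_eq, exp_neg]
  push_cast
  field_simp
  ring

end ExplicitFormulas

lemma Mfun_three_pos {d t : ℝ} (ht : |d| + 1 ≤ t) : 0 < Mfun 3 (2 / 3) d t := by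
  rw [Mfun_three_eq]
  nlinarith [le_abs_self d, sq_nonneg (exp (-t))]

lemma Pfun_three_pos {d t : ℝ} (ht : |d| + 1 ≤ t) : 0 < Pfun 3 (2 / 3) d t := by
  have hexp : (t + 1) ^ 2 ≤ exp t ^ 2 := by
    gcongr
    · linarith [abs_nonneg d]
    · exact add_one_le_exp t
  have hsq : (|d| + 1) ^ 2 ≤ t ^ 2 := by
    gcongr
  rw [Pfun_three_eq]
  nlinarith [neg_abs_le d, sq_nonneg |d|]

lemma eventually_Mfun_three_pos_and_Pfun_three_pos (d : ℝ) :
    ∀ᶠ t in atTop, 0 < Mfun 3 (2 / 3) d t ∧ 0 < Pfun 3 (2 / 3) d t :=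
  (eventually_ge_atTop (|d| + 1)).mono fun _ ht => ⟨Mfun_three_pos ht, Pfun_three_pos ht⟩

lemma tendsto_one_sub_exp_neg_pow {k : ℕ} (hk : k ≠ 0) :
    Tendsto (fun t => 1 - exp (-t) ^ k) atTop (𝓝 1) := by
  simpa [hk] using (tendsto_exp_neg_atTop_nhds_zero.pow k).const_sub 1

lemma tendsto_sub_mul_exp_neg_sq (d : ℝ) :
    Tendsto (fun t => (d - t) * exp (-t) ^ 2) atTop (𝓝 0) := by
  have hexp := tendsto_exp_neg_atTop_nhds_zero
  have hlin : Tendsto (fun t => t * exp (-t)) atTop (𝓝 0) := by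
    simpa using tendsto_pow_mul_exp_neg_atTop_nhds_zero 1
  simpa [sub_mul, mul_assoc, sq] using ((hexp.pow 2).const_mul d).sub (hlin.mul hexp)

lemma tendsto_Mfun_three_div_self (d : ℝ) :
    Tendsto (fun t => Mfun 3 (2 / 3) d t / t) atTop (𝓝 1) := by
  have hrem : Tendsto (fun t => (d + (1 - exp (-t) ^ 2) / 2) / t) atTop (𝓝 0) :=
    (tendsto_const_nhds.add ((tendsto_one_sub_exp_neg_pow two_ne_zero).div_const 2)).div_atTop
      tendsto_id
  have hlim : Tendsto (fun t => 1 - (d + (1 - exp (-t) ^ 2) / 2) / t) atTop (𝓝 1) := by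
    simpa using hrem.const_sub 1
  refine hlim.congr' ?_
  filter_upwards [eventually_gt_atTop 0] with t ht
  rw [Mfun_three_eq]
  field_simp
  ring

lemma tendsto_Pfun_three_mul_exp_neg_sq (d : ℝ) :
    Tendsto (fun t => Pfun 3 (2 / 3) d t * exp (-t) ^ 2) atTop (𝓝 (1 / 2)) := by
  have hlim : Tendsto (fun t => (1 - exp (-t) ^ 2) / 2 + (d - t) * exp (-t) ^ 2) atTop
      (𝓝 (1 / 2)) := by
    simpa using ((tendsto_one_sub_exp_neg_pow two_ne_zero).div_const 2).add
      (tendsto_sub_mul_exp_neg_sq d)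
  refine hlim.congr fun t => ?_
  rw [Pfun_three_eq, exp_neg]
  field_simp
  ring

lemma tendsto_numerator_mul_exp_neg_sq (d : ℝ) :
    Tendsto (fun t => ((exp t ^ 2 - exp (-t) ^ 2) / 4 - t + d) * exp (-t) ^ 2) atTop
      (𝓝 (1 / 4)) := by
  have hlim : Tendsto (fun t => (1 - exp (-t) ^ 4) / 4 + (d - t) * exp (-t) ^ 2) atTop
      (𝓝 (1 / 4)) := by
    simpa using ((tendsto_one_sub_exp_neg_pow four_ne_zero).div_const 4).add
      (tendsto_sub_mul_exp_neg_sq d)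
  refine hlim.congr fun t => ?_
  rw [exp_neg]
  field_simp
  ring

/-- Let `n = 3`, `H = 2/3` and `d ∈ ℝ`. Then `M_{H,d}(t) > 0` and `P_{H,d}(t) > 0` for all
sufficiently large `t`, and `lim_{t→∞} 2√2·√t·e^{−t}·Q_{H,d}(t) = 1`. -/
theorem stmt10 (d : ℝ) :
    (∃ t₀ : ℝ, ∀ t, t₀ ≤ t → 0 < Mfun 3 (2 / 3) d t ∧ 0 < Pfun 3 (2 / 3) d t) ∧
    Tendsto (fun t : ℝ => 2 * Real.sqrt 2 * Real.sqrt t * Real.exp (-t) * Qfun 3 (2 / 3) d t)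
      atTop (𝓝 1) := by
  refine ⟨eventually_atTop.1 (eventually_Mfun_three_pos_and_Pfun_three_pos d), ?_⟩
  have hlim := ((tendsto_numerator_mul_exp_neg_sq d).const_mul (2 * √2)).div
    ((tendsto_Mfun_three_div_self d).mul (tendsto_Pfun_three_mul_exp_neg_sq d)).sqrt
    (by norm_num)
  have hval : 2 * √2 * (1 / 4) / √(1 * (1 / 2)) = (1 : ℝ) := by
    rw [one_mul, sqrt_div' _ zero_le_two, sqrt_one]
    field_simp
    rw [sq_sqrt zero_le_two]
    norm_num
  rw [hval] at hlim
  refine hlim.congr' ?_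
  filter_upwards [eventually_gt_atTop 0] with t ht
  have hsqrt : √(Mfun 3 (2 / 3) d t / t * (Pfun 3 (2 / 3) d t * exp (-t) ^ 2)) =
      √(Mfun 3 (2 / 3) d t * Pfun 3 (2 / 3) d t) * (exp (-t) / √t) := by
    rw [← sqrt_sq (div_nonneg (exp_pos (-t)).le (sqrt_nonneg t)), ← sqrt_mul' _ (sq_nonneg _),
      div_pow, sq_sqrt ht.le]
    ring_nf
  rw [Pi.div_apply, hsqrt, Qfun_three_eq]
  field_simp
end

section
/- Let n ≥ 3 be an integer, H = (n-1)/n and d ∈ ℝ. Then R_{H,d} is strictly decreasing on (0, ∞) and R_{H,d}(t) → −∞ as t → ∞. Consequently, if d < 1 there is a unique c > 0 with R_{H,d}(c) = 0, with R_{H,d} > 0 on [0, c) and R_{H,d} < 0 on (c, ∞); and if d ≥ 1 then R_{H,d}(t) < 0 for all t > 0. -/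
open Filter Topology

/-- `Jfun m t = ∫₀ᵗ cosh^m(r) dr`. -/
noncomputable def Jfun (m : ℕ) (t : ℝ) : ℝ := ∫ r in (0:ℝ)..t, Real.cosh r ^ m

/-- `Rfun n H d t = cosh^{n-1}(t) − nH·J_{n-1}(t) − d`. -/
noncomputable def Rfun (n : ℕ) (H d t : ℝ) : ℝ :=
  Real.cosh t ^ (n - 1) - n * H * Jfun (n - 1) t - d

/-- `Sfun n H d t = cosh^{n-1}(t) + nH·J_{n-1}(t) + d`. -/
noncomputable def Sfun (n : ℕ) (H d t : ℝ) : ℝ :=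
  Real.cosh t ^ (n - 1) + n * H * Jfun (n - 1) t + d

/-- `Tfun n H d t = (nH·J_{n-1}(t) + d)/√(R·S)`. -/
noncomputable def Tfun (n : ℕ) (H d t : ℝ) : ℝ :=
  (n * H * Jfun (n - 1) t + d) / Real.sqrt (Rfun n H d t * Sfun n H d t)

/-! With `H = (n - 1)/n` the coefficient `nH` equals `m = n - 1`, and since `sinh - cosh = -exp (-·)`
the derivative of `R_{H,d}` collapses to `-m cosh^{m-1}(t) e^{-t}`. For `m ≥ 2` we have
`cosh^{m-1} ≥ cosh` and `cosh(t) e^{-t} ≥ 1/2`, so this derivative is at most `-1`: `R_{H,d}`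
decreases strictly and at least linearly. As `R_{H,d}(0) = 1 - d`, the intermediate value
theorem gives the rest. -/

open Real

theorem hasDerivAt_Jfun (m : ℕ) (t : ℝ) : HasDerivAt (Jfun m) (cosh t ^ m) t :=
  ((continuous_cosh.pow m).integral_hasStrictDerivAt 0 t).hasDerivAt

theorem Rfun_zero (n : ℕ) (H d : ℝ) : Rfun n H d 0 = 1 - d := by
  simp [Rfun, Jfun]

theorem natCast_mul_sub_one_div_self (n : ℕ) : (n : ℝ) * (((n : ℝ) - 1) / n) = (n - 1 : ℕ) := by
  rcases n with _ | n
  · simp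
  · push_cast
    field_simp
    ring

theorem hasDerivAt_cosh_pow_sub_mul_Jfun (m : ℕ) (t : ℝ) :
    HasDerivAt (fun s => cosh s ^ m - m * Jfun m s) (-(m * (cosh t ^ (m - 1) * exp (-t)))) t := by
  have h : HasDerivAt (fun s => cosh s ^ m - m * Jfun m s)
      (m * cosh t ^ (m - 1) * sinh t - m * cosh t ^ m) t :=
    ((hasDerivAt_cosh t).pow m).sub ((hasDerivAt_Jfun m t).const_mul (m : ℝ))
  refine h.congr_deriv ?_
  rcases m with _ | m
  · simp
  · rw [← cosh_sub_sinh, Nat.add_sub_cancel, pow_succ]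
    ring

theorem hasDerivAt_Rfun {n : ℕ} {H : ℝ} (d : ℝ) (hH : n * H = (n - 1 : ℕ)) (t : ℝ) :
    HasDerivAt (Rfun n H d) (-((n - 1 : ℕ) * (cosh t ^ (n - 1 - 1) * exp (-t)))) t := by
  have h : Rfun n H d = fun s => cosh s ^ (n - 1) - (n - 1 : ℕ) * Jfun (n - 1) s - d := by
    funext s
    rw [Rfun, hH]
  rw [h]
  exact (hasDerivAt_cosh_pow_sub_mul_Jfun (n - 1) t).sub_const d

theorem one_le_mul_cosh_pow_mul_exp_neg {m : ℕ} (hm : 2 ≤ m) (t : ℝ) :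
    1 ≤ m * (cosh t ^ (m - 1) * exp (-t)) := by
  have hcosh : cosh t ≤ cosh t ^ (m - 1) :=
    le_self_pow₀ (one_le_cosh t) (by omega)
  have hhalf : 1 / 2 ≤ cosh t * exp (-t) := by
    rw [cosh_eq, div_mul_eq_mul_div, add_mul, ← exp_add, add_neg_cancel, exp_zero]
    linarith [(exp_pos (-t + -t)).le, exp_add (-t) (-t)]
  have hm' : (2 : ℝ) ≤ m := by exact_mod_cast hm
  calc (1 : ℝ) ≤ 2 * (cosh t * exp (-t)) := by linarith
    _ ≤ m * (cosh t ^ (m - 1) * exp (-t)) := by gcongr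

theorem tendsto_atBot_of_hasDerivAt_le_neg {f f' : ℝ → ℝ} {c : ℝ} (hc : 0 < c)
    (hf : ∀ t, HasDerivAt f (f' t) t) (hf' : ∀ t, f' t ≤ -c) : Tendsto f atTop atBot := by
  have hbound : ∀ t, 0 ≤ t → f t ≤ f 0 + -c * t := fun t ht => by
    have := image_sub_le_mul_sub_of_deriv_le (fun x => (hf x).differentiableAt)
      (fun x => (hf x).deriv ▸ hf' x) ht
    linarith
  refine tendsto_atBot_mono' atTop (eventually_ge_atTop 0 |>.mono hbound) ?_
  exact tendsto_atBot_add_const_left _ _ (tendsto_id.const_mul_atTop_of_neg (by linarith))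

theorem exists_pos_zero_of_strictAnti {f : ℝ → ℝ} (hf : StrictAnti f) (hcont : Continuous f)
    (htop : Tendsto f atTop atBot) (h0 : 0 < f 0) :
    ∃ c, 0 < c ∧ f c = 0 ∧ (∀ t, t < c → 0 < f t) ∧ (∀ t, c < t → f t < 0) := by
  obtain ⟨T, hT0, hTneg⟩ : ∃ T, 0 < T ∧ f T < 0 :=
    ((eventually_gt_atTop 0).and (htop.eventually (eventually_lt_atBot 0))).exists
  obtain ⟨c, hc, hfc⟩ := intermediate_value_Icc' hT0.le hcont.continuousOn ⟨hTneg.le, h0.le⟩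
  have hc0 : 0 < c := lt_of_le_of_ne hc.1 (by rintro rfl; linarith)
  exact ⟨c, hc0, hfc, fun t ht => hfc ▸ hf ht, fun t ht => hfc ▸ hf ht⟩

/-- Let `n ≥ 3`, `H = (n-1)/n` and `d ∈ ℝ`. Then `R_{H,d}` is strictly decreasing on
`(0,∞)` and tends to `−∞` at `+∞`. Consequently, if `d < 1` there is a unique `c > 0`
with `R_{H,d}(c) = 0`, `R_{H,d} > 0` on `[0,c)` and `R_{H,d} < 0` on `(c,∞)`; and if
`d ≥ 1` then `R_{H,d}(t) < 0` for all `t > 0`. -/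
theorem stmt17 (n : ℕ) (hn : 3 ≤ n) (H d : ℝ) (hH : H = ((n : ℝ) - 1) / n) :
    StrictAntiOn (Rfun n H d) (Set.Ioi 0) ∧
    Tendsto (Rfun n H d) atTop atBot ∧
    (d < 1 → ∃ c : ℝ, 0 < c ∧ Rfun n H d c = 0 ∧
      (∀ t, 0 ≤ t → t < c → 0 < Rfun n H d t) ∧
      (∀ t, c < t → Rfun n H d t < 0) ∧
      (∀ c', 0 < c' → Rfun n H d c' = 0 → c' = c)) ∧
    (1 ≤ d → ∀ t : ℝ, 0 < t → Rfun n H d t < 0) := by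
  have hR := hasDerivAt_Rfun d (hH ▸ natCast_mul_sub_one_div_self n)
  have hR' : ∀ t, -((n - 1 : ℕ) * (cosh t ^ (n - 1 - 1) * exp (-t))) ≤ -1 := fun t =>
    neg_le_neg (one_le_mul_cosh_pow_mul_exp_neg (by omega) t)
  have hanti : StrictAnti (Rfun n H d) :=
    strictAnti_of_hasDerivAt_neg hR fun t => (hR' t).trans_lt (by norm_num)
  have htends := tendsto_atBot_of_hasDerivAt_le_neg one_pos hR hR'
  refine ⟨hanti.strictAntiOn _, htends, fun hd => ?_, fun hd t ht => ?_⟩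
  · obtain ⟨c, hc0, hc, hpos, hneg⟩ := exists_pos_zero_of_strictAnti hanti
      (continuous_iff_continuousAt.2 fun t => (hR t).continuousAt) htends
      (by rw [Rfun_zero]; linarith)
    exact ⟨c, hc0, hc, fun t _ => hpos t, hneg, fun c' _ hc' => hanti.injective (hc'.trans hc.symm)⟩
  · linarith [hanti ht, Rfun_zero n H d]
end
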